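/- arXiv:1406.6164 — 6 statements merged into one kernel-verified Lean document; each statement's English description precedes it below -/
import Mathlib

section
/- Let a > 0, let w(x) = e^{−a} a^x / x! be the Poisson weight on ℕ, and let (Ĉ_n)_{n≥0}, Ĉ_n : ℕ → ℝ, be the family determined by Ĉ_0(x) = 1, Ĉ_1(x) = (a − x)/√a, and Ĉ_{n+1}(x) = ((n + a − x)/√(a(n+1)))·Ĉ_n(x) − √(n/(n+1))·Ĉ_{n−1}(x) for n ≥ 1. Then for all n, m ∈ ℕ the series Σ_{x=0}^∞ Ĉ_n(x)·Ĉ_m(x)·w(x) converges and equals 1 if n = m and 0 if n ≠ m. -/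
/-!
Let `P n` be the monic Charlier polynomials, generated by the raising relation
`P (n + 1) x = x * P n (x - 1) - a * P n x`. Since `(x + 1) w (x + 1) = a w x`, summation by parts
turns `∑ P (n + 1) Q w` into `a ∑ P n ΔQ w`, where `ΔQ x = Q (x + 1) - Q x`, and
`Δ P (m + 1) = (m + 1) P m`; induction then gives `∑ P n P m w = δₙₘ n! aⁿ`. The raising relation
together with `Δ P (n + 1) = (n + 1) P n` yields the three-term recurrence, so `Ĉ n` is
`(-1)ⁿ P n / √(n! aⁿ)`. The bound `|P n x| ≤ (x + a)ⁿ` makes every series converge.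
-/

open Real Nat

/-- The truncated `x - 1` is harmless: at `x = 0` that term is multiplied by `x`. -/
noncomputable def charlier (a : ℝ) : ℕ → ℕ → ℝ
  | 0, _ => 1
  | n + 1, x => x * charlier a n (x - 1) - a * charlier a n x

noncomputable def poissonWeight (a : ℝ) (x : ℕ) : ℝ := exp (-a) * a ^ x / x !

/-- The sign makes `normalizedCharlier a 1 x = (a - x) / √a`. -/
noncomputable def normalizedCharlier (a : ℝ) (n x : ℕ) : ℝ :=
  (-1) ^ n / √(n ! * a ^ n) * charlier a n x

theorem natCast_mul_sub_pred_of_add_one_sub {f g : ℕ → ℝ} (h : ∀ x, f (x + 1) - f x = g x)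
    (x : ℕ) : (x : ℝ) * (f x - f (x - 1)) = x * g (x - 1) := by
  cases x with
  | zero => simp
  | succ y => rw [Nat.add_sub_cancel, h]

section Charlier

variable {a : ℝ}

@[simp]
theorem charlier_zero (x : ℕ) : charlier a 0 x = 1 := rfl

theorem charlier_succ (n x : ℕ) :
    charlier a (n + 1) x = x * charlier a n (x - 1) - a * charlier a n x := rfl

theorem charlier_succ_add_one_sub (n x : ℕ) :
    charlier a (n + 1) (x + 1) - charlier a (n + 1) x = (n + 1) * charlier a n x := by
  induction n generalizing x with
  | zero => simp only [charlier_succ, charlier_zero]; push_cast; ring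
  | succ n ih =>
    have hpred := natCast_mul_sub_pred_of_add_one_sub ih x
    rw [charlier_succ (n + 1), charlier_succ (n + 1) x, Nat.add_sub_cancel]
    push_cast
    linear_combination hpred - a * ih x - (n + 1) * charlier_succ (a := a) n x

theorem charlier_add_two (n x : ℕ) :
    charlier a (n + 2) x
      = (x - (n + 1) - a) * charlier a (n + 1) x - a * (n + 1) * charlier a n x := by
  have hpred := natCast_mul_sub_pred_of_add_one_sub (charlier_succ_add_one_sub (a := a) n) x
  rw [charlier_succ (n + 1)]
  linear_combination -hpred + (n + 1) * charlier_succ (a := a) n x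

theorem abs_charlier_le (ha : 0 ≤ a) (n x : ℕ) : |charlier a n x| ≤ (x + a) ^ n := by
  induction n generalizing x with
  | zero => simp
  | succ n ih =>
    have hx : ((x - 1 : ℕ) : ℝ) + a ≤ x + a := by gcongr; exact_mod_cast Nat.sub_le x 1
    calc |charlier a (n + 1) x|
        ≤ x * |charlier a n (x - 1)| + a * |charlier a n x| := by
          rw [charlier_succ]
          refine (abs_sub _ _).trans_eq ?_
          rw [abs_mul, abs_mul, Nat.abs_cast, abs_of_nonneg ha]
      _ ≤ x * (x + a) ^ n + a * (x + a) ^ n := by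
          gcongr
          · exact (ih _).trans (pow_le_pow_left₀ (by positivity) hx n)
          · exact ih x
      _ = (x + a) ^ (n + 1) := by ring

end Charlier

section PoissonWeight

variable {a : ℝ}

theorem hasSum_poissonWeight (a : ℝ) : HasSum (poissonWeight a) 1 := by
  have h := (NormedSpace.expSeries_div_hasSum_exp a).mul_left (exp (-a))
  rw [← exp_eq_exp_ℝ, ← exp_add, neg_add_cancel, exp_zero] at h
  exact h.congr_fun fun x => mul_div_assoc ..

theorem poissonWeight_nonneg (ha : 0 ≤ a) (x : ℕ) : 0 ≤ poissonWeight a x := by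
  unfold poissonWeight; positivity

theorem natCast_add_one_mul_poissonWeight_succ (a : ℝ) (x : ℕ) :
    ((x : ℝ) + 1) * poissonWeight a (x + 1) = a * poissonWeight a x := by
  simp only [poissonWeight, factorial_succ, pow_succ]
  push_cast
  field_simp

theorem summable_mul_poissonWeight_of_abs_le (ha : 0 ≤ a) {f : ℕ → ℝ} (N : ℕ)
    (hf : ∀ x, |f x| ≤ (x + a) ^ N) : Summable (fun x => f x * poissonWeight a x) := by
  refine .of_norm_bounded ((summable_pow_div_factorial (exp 1 * a)).mul_left (N ! : ℝ))
    fun x => ?_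
  have hpow : ((x : ℝ) + a) ^ N ≤ N ! * exp (x + a) := by
    have := pow_div_factorial_le_exp (x := x + a) (by positivity) N
    rwa [div_le_iff₀' (by positivity)] at this
  calc ‖f x * poissonWeight a x‖ = |f x| * poissonWeight a x := by
        rw [norm_mul, norm_eq_abs, norm_eq_abs, abs_of_nonneg (poissonWeight_nonneg ha x)]
    _ ≤ N ! * exp (x + a) * poissonWeight a x := by
        gcongr
        · exact poissonWeight_nonneg ha x
        · exact (hf x).trans hpow
    _ = N ! * ((exp 1 * a) ^ x / x !) := by
        rw [poissonWeight, mul_pow, ← exp_nat_mul, mul_one, exp_add, exp_neg]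
        field_simp

end PoissonWeight

section Orthogonality

variable {a : ℝ}

theorem summable_charlier_mul_charlier_mul_poissonWeight (ha : 0 ≤ a) (n m : ℕ) :
    Summable (fun x => charlier a n x * charlier a m x * poissonWeight a x) :=
  summable_mul_poissonWeight_of_abs_le ha (n + m) fun x => by
    rw [abs_mul, pow_add]
    exact mul_le_mul (abs_charlier_le ha n x) (abs_charlier_le ha m x) (abs_nonneg _)
      (by positivity)

theorem hasSum_charlier_succ_mul_poissonWeight {n : ℕ} {Q : ℕ → ℝ} {s : ℝ}
    (hQ : Summable (fun x => charlier a n x * Q x * poissonWeight a x))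
    (hΔQ : HasSum (fun x => charlier a n x * (Q (x + 1) - Q x) * poissonWeight a x) s) :
    HasSum (fun x => charlier a (n + 1) x * Q x * poissonWeight a x) (a * s) := by
  set t := ∑' x, charlier a n x * Q x * poissonWeight a x
  have hshift : HasSum (fun x => (x * charlier a n (x - 1)) * Q x * poissonWeight a x)
      (a * (s + t)) := by
    rw [← hasSum_nat_add_iff' 1, Finset.sum_range_one, Nat.cast_zero, zero_mul, zero_mul,
      zero_mul, sub_zero]
    refine ((hΔQ.add hQ.hasSum).mul_left a).congr_fun fun x => ?_
    rw [Nat.add_sub_cancel, Nat.cast_succ]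
    linear_combination charlier a n x * Q (x + 1) * natCast_add_one_mul_poissonWeight_succ a x
  have h := hshift.sub (hQ.hasSum.mul_left a)
  rw [mul_add, add_sub_cancel_right] at h
  exact h.congr_fun fun x => by rw [charlier_succ]; ring

theorem hasSum_charlier_succ_mul_charlier_zero_mul_poissonWeight (ha : 0 ≤ a) (n : ℕ) :
    HasSum (fun x => charlier a (n + 1) x * charlier a 0 x * poissonWeight a x) 0 := by
  simpa using hasSum_charlier_succ_mul_poissonWeight
    (summable_charlier_mul_charlier_mul_poissonWeight ha n 0)
    (hasSum_zero.congr_fun fun x => by simp)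

theorem hasSum_charlier_mul_charlier_mul_poissonWeight (ha : 0 ≤ a) (n m : ℕ) :
    HasSum (fun x => charlier a n x * charlier a m x * poissonWeight a x)
      (if n = m then n ! * a ^ n else 0) := by
  induction n generalizing m with
  | zero =>
    cases m with
    | zero => simpa using hasSum_poissonWeight a
    | succ m =>
      simpa [mul_comm (charlier a 0 _)] using
        hasSum_charlier_succ_mul_charlier_zero_mul_poissonWeight ha m
  | succ n ih =>
    cases m with
    | zero => simpa using hasSum_charlier_succ_mul_charlier_zero_mul_poissonWeight ha n
    | succ m =>
      have hΔ : HasSum (fun x => charlier a n x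
          * (charlier a (m + 1) (x + 1) - charlier a (m + 1) x) * poissonWeight a x) _ :=
        ((ih m).mul_left ((m : ℝ) + 1)).congr_fun fun x => by
          rw [charlier_succ_add_one_sub]; ring
      convert hasSum_charlier_succ_mul_poissonWeight
        (summable_charlier_mul_charlier_mul_poissonWeight ha n (m + 1)) hΔ using 1
      split_ifs with hnm hnm' hnm'
      · subst hnm'; push_cast [factorial_succ]; ring
      · omega
      · omega
      · simp

end Orthogonality

section Normalized

variable {a : ℝ}

theorem normalizedCharlier_zero (x : ℕ) : normalizedCharlier a 0 x = 1 := by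
  simp [normalizedCharlier]

theorem normalizedCharlier_one (x : ℕ) : normalizedCharlier a 1 x = (a - x) / √a := by
  simp only [normalizedCharlier, charlier_succ, charlier_zero, factorial_one, Nat.cast_one,
    one_mul, pow_one]
  ring

theorem sqrt_factorial_mul_pow_succ (ha : 0 ≤ a) (n : ℕ) :
    √((n + 1)! * a ^ (n + 1)) = √(a * (n + 1)) * √(n ! * a ^ n) := by
  rw [← sqrt_mul (by positivity), factorial_succ, pow_succ]
  push_cast
  ring_nf

theorem normalizedCharlier_succ (ha : 0 < a) {n : ℕ} (hn : 1 ≤ n) (x : ℕ) :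
    normalizedCharlier a (n + 1) x
      = ((n + a - x) / √(a * (n + 1))) * normalizedCharlier a n x
        - √((n : ℝ) / (n + 1)) * normalizedCharlier a (n - 1) x := by
  obtain ⟨k, rfl⟩ := Nat.exists_eq_add_of_le' hn
  have hq₁ : 0 < √(a * (k + 1)) := sqrt_pos.2 (by positivity)
  have hq₂ : 0 < √(a * (k + 2)) := sqrt_pos.2 (by positivity)
  have hs : 0 < √(k ! * a ^ k) := sqrt_pos.2 (by positivity)
  have hratio : √(((k : ℝ) + 1) / (k + 2)) = √(a * (k + 1)) / √(a * (k + 2)) := by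
    rw [← sqrt_div' _ (by positivity), mul_div_mul_left _ _ ha.ne']
  have hP : charlier a (k + 2) x = (x - (k + 1) - a) * charlier a (k + 1) x
      - √(a * (k + 1)) ^ 2 * charlier a k x := by
    rw [sq_sqrt (by positivity), charlier_add_two]
  simp only [normalizedCharlier, Nat.add_sub_cancel, hP,
    sqrt_factorial_mul_pow_succ ha.le (k + 1), sqrt_factorial_mul_pow_succ ha.le k]
  push_cast
  rw [show (k : ℝ) + 1 + 1 = k + 2 by ring, hratio]
  field_simp
  ring

theorem hasSum_normalizedCharlier_mul_normalizedCharlier_mul_poissonWeight (ha : 0 < a)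
    (n m : ℕ) :
    HasSum (fun x => normalizedCharlier a n x * normalizedCharlier a m x * poissonWeight a x)
      (if n = m then 1 else 0) := by
  have h := (hasSum_charlier_mul_charlier_mul_poissonWeight ha.le n m).mul_left
    ((-1) ^ n / √(n ! * a ^ n) * ((-1) ^ m / √(m ! * a ^ m)))
  have hval : (-1) ^ n / √(n ! * a ^ n) * ((-1) ^ m / √(m ! * a ^ m))
      * (if n = m then (n ! : ℝ) * a ^ n else 0) = if n = m then 1 else 0 := by
    split_ifs with hnm
    · subst hnm
      have hpos : 0 < (n ! : ℝ) * a ^ n := by positivity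
      have hs : 0 < √(n ! * a ^ n) := sqrt_pos.2 hpos
      field_simp
      rw [sq_sqrt hpos.le, ← pow_mul, mul_comm n, pow_mul, neg_one_sq, one_pow, one_mul]
    · exact mul_zero _
  rw [hval] at h
  exact h.congr_fun fun x => by rw [normalizedCharlier, normalizedCharlier]; ring

theorem eq_normalizedCharlier_of_recurrence (ha : 0 < a) {C : ℕ → ℕ → ℝ}
    (hC0 : ∀ x : ℕ, C 0 x = 1)
    (hC1 : ∀ x : ℕ, C 1 x = (a - x) / √a)
    (hCrec : ∀ n : ℕ, 1 ≤ n → ∀ x : ℕ,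
      C (n + 1) x = ((n + a - x) / √(a * (n + 1))) * C n x
        - √((n : ℝ) / (n + 1)) * C (n - 1) x) :
    C = normalizedCharlier a := by
  funext n x
  induction n using Nat.twoStepInduction with
  | zero => rw [hC0, normalizedCharlier_zero]
  | one => rw [hC1, normalizedCharlier_one]
  | more n ih₀ ih₁ =>
    rw [hCrec (n + 1) (by omega), normalizedCharlier_succ ha (by omega), ih₁,
      Nat.add_sub_cancel, ih₀]

end Normalized

theorem stmt_4 (a : ℝ) (ha : 0 < a)
    (w : ℕ → ℝ) (hw : ∀ x : ℕ, w x = Real.exp (-a) * a ^ x / x.factorial)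
    (C : ℕ → ℕ → ℝ)
    (hC0 : ∀ x : ℕ, C 0 x = 1)
    (hC1 : ∀ x : ℕ, C 1 x = (a - x) / Real.sqrt a)
    (hCrec : ∀ n : ℕ, 1 ≤ n → ∀ x : ℕ,
      C (n + 1) x = ((n + a - x) / Real.sqrt (a * (n + 1))) * C n x
        - Real.sqrt ((n : ℝ) / (n + 1)) * C (n - 1) x) :
    ∀ n m : ℕ, Summable (fun x : ℕ => C n x * C m x * w x) ∧
      (∑' x : ℕ, C n x * C m x * w x) = if n = m then 1 else 0 := by
  obtain rfl : C = normalizedCharlier a := eq_normalizedCharlier_of_recurrence ha hC0 hC1 hCrec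
  obtain rfl : w = poissonWeight a := funext hw
  intro n m
  have h := hasSum_normalizedCharlier_mul_normalizedCharlier_mul_poissonWeight ha n m
  exact ⟨h.summable, h.tsum_eq⟩
end

section
/- Let a > 0 and λ > 0 with λ ≠ a, let w(x) = e^{−a} a^x / x! be the Poisson weight on ℕ, and let p(x) = e^{−λ} λ^x / x!. Then for every m ∈ ℕ, Σ_{k=0}^{m} a^{−k} Σ_{x=0}^∞ (x!/(x−k)!) · p(x)² / w(x) = ((1 − (λ/a)^{2(m+1)})/(1 − (λ/a)²)) · exp((a−λ)²/a). -/
/-!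
Up to the factor `exp (a - 2λ)`, the ratio `p(x)² / w(x)` is the exponential-series term
`(λ²/a)^x / x!`, and the `k`-th factorial moment `∑ x^(k) t^x / x!` of that series is `t^k e^t`.
Hence the `k`-th summand is `(λ/a)^(2k) · exp((a-λ)²/a)`, and the norm is a finite geometric sum
with ratio `(λ/a)² ≠ 1`.
-/

open scoped BigOperators Nat

theorem Real.hasSum_pow_div_factorial (t : ℝ) :
    HasSum (fun n : ℕ => t ^ n / n !) (Real.exp t) := by
  rw [Real.exp_eq_exp_ℝ]
  exact NormedSpace.expSeries_div_hasSum_exp t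

theorem hasSum_descFactorial_mul_pow_div_factorial (t : ℝ) (k : ℕ) :
    HasSum (fun x : ℕ => (x.descFactorial k : ℝ) * t ^ x / x !) (t ^ k * Real.exp t) := by
  -- the terms with `x < k` vanish; after the shift `x = n + k` the rest is `t ^ k * (t ^ n / n !)`
  refine (hasSum_nat_add_iff' k).mp ?_
  have hhead : ∑ i ∈ Finset.range k, (i.descFactorial k : ℝ) * t ^ i / i ! = 0 :=
    Finset.sum_eq_zero fun i hi => by
      simp [Nat.descFactorial_eq_zero_iff_lt.2 (Finset.mem_range.1 hi)]
  rw [hhead, sub_zero]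
  refine ((Real.hasSum_pow_div_factorial t).mul_left (t ^ k)).congr_fun fun n => ?_
  have hfac : (n ! : ℝ) * (n + k).descFactorial k = (n + k)! := by
    exact_mod_cast Nat.add_sub_cancel n k ▸ Nat.factorial_mul_descFactorial (Nat.le_add_left k n)
  rw [← hfac, pow_add]
  have : (n ! : ℝ) ≠ 0 := by positivity
  have : ((n + k).descFactorial k : ℝ) ≠ 0 := by
    exact_mod_cast (Nat.descFactorial_pos.2 (Nat.le_add_left k n)).ne'
  field_simp

theorem poisson_sq_div_poisson (a l : ℝ) (ha : a ≠ 0) (x : ℕ) :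
    (Real.exp (-l) * l ^ x / x !) ^ 2 / (Real.exp (-a) * a ^ x / x !)
      = Real.exp (a - 2 * l) * ((l ^ 2 / a) ^ x / x !) := by
  have hexp : Real.exp (a - 2 * l) = Real.exp (-l) ^ 2 / Real.exp (-a) := by
    rw [← Real.exp_nat_mul, ← Real.exp_sub]
    ring_nf
  have : (x ! : ℝ) ≠ 0 := by positivity
  rw [hexp, div_pow (l ^ 2)]
  field_simp
  ring

theorem zpow_neg_mul_tsum_descFactorial_mul_poisson_sq_div_poisson (a l : ℝ) (ha : a ≠ 0)
    (k : ℕ) :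
    a ^ (-(k : ℤ)) * ∑' x : ℕ, (x.descFactorial k : ℝ) *
        (Real.exp (-l) * l ^ x / x !) ^ 2 / (Real.exp (-a) * a ^ x / x !)
      = ((l / a) ^ 2) ^ k * Real.exp ((a - l) ^ 2 / a) := by
  have hterm : ∀ x : ℕ, (x.descFactorial k : ℝ) *
      (Real.exp (-l) * l ^ x / x !) ^ 2 / (Real.exp (-a) * a ^ x / x !)
        = Real.exp (a - 2 * l) * ((x.descFactorial k : ℝ) * (l ^ 2 / a) ^ x / x !) := by
    intro x
    rw [mul_div_assoc, poisson_sq_div_poisson a l ha]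
    ring
  have hexp : Real.exp (a - 2 * l) * Real.exp (l ^ 2 / a) = Real.exp ((a - l) ^ 2 / a) := by
    rw [← Real.exp_add]
    congr 1
    field_simp
    ring
  simp only [hterm, tsum_mul_left, (hasSum_descFactorial_mul_pow_div_factorial _ k).tsum_eq]
  rw [zpow_neg, zpow_natCast, ← hexp, div_pow, div_pow, div_pow]
  field_simp
  ring

theorem stmt_10 (a lam : ℝ) (ha : 0 < a) (hlam : 0 < lam) (hne : lam ≠ a)
    (w : ℕ → ℝ) (hw : ∀ x : ℕ, w x = Real.exp (-a) * a ^ x / x.factorial)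
    (p : ℕ → ℝ) (hp : ∀ x : ℕ, p x = Real.exp (-lam) * lam ^ x / x.factorial)
    (m : ℕ) :
    ∑ k ∈ Finset.range (m + 1), a ^ (-(k : ℤ)) *
        ∑' x : ℕ, (x.descFactorial k : ℝ) * p x ^ 2 / w x
      = ((1 - (lam / a) ^ (2 * (m + 1))) / (1 - (lam / a) ^ 2)) *
          Real.exp ((a - lam) ^ 2 / a) := by
  have hq : (lam / a) ^ 2 ≠ 1 := by
    rw [Ne, pow_eq_one_iff_of_nonneg (div_pos hlam ha).le two_ne_zero, div_eq_one_iff_eq ha.ne']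
    exact hne
  simp only [hp, hw, zpow_neg_mul_tsum_descFactorial_mul_poisson_sq_div_poisson a lam ha.ne']
  rw [← Finset.sum_mul, geom_sum_eq hq, ← pow_mul, ← neg_sub 1, ← neg_sub 1 ((lam / a) ^ 2),
    neg_div_neg_eq]
end

section
/- Let q > 0 be real and let f : ℕ → ℝ be bounded. Then both series below converge absolutely and Σ_{x=0}^∞ x · f(x) · e^{−q} q^x / x! = q · Σ_{x=0}^∞ f(x+1) · e^{−q} q^x / x!. -/
open scoped BigOperators

theorem stmt_12 (q : ℝ) (hq : 0 < q) (f : ℕ → ℝ) (hf : ∃ M : ℝ, ∀ x : ℕ, |f x| ≤ M) :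
    Summable (fun x : ℕ => |(x : ℝ) * f x * (Real.exp (-q) * q ^ x / x.factorial)|) ∧
    Summable (fun x : ℕ => |f (x + 1) * (Real.exp (-q) * q ^ x / x.factorial)|) ∧
    ∑' x : ℕ, (x : ℝ) * f x * (Real.exp (-q) * q ^ x / x.factorial)
      = q * ∑' x : ℕ, f (x + 1) * (Real.exp (-q) * q ^ x / x.factorial) := by
  obtain ⟨M, hM⟩ := hf
  have hM0 : 0 ≤ M := le_trans (abs_nonneg _) (hM 0)
  have hbase : Summable (fun x : ℕ => q ^ x / x.factorial) :=
    Real.summable_pow_div_factorial q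
  have hpos : ∀ x : ℕ, 0 ≤ Real.exp (-q) * q ^ x / x.factorial := by
    intro x
    positivity
  -- summability of the shifted series
  have hmaj : Summable (fun x : ℕ => M * Real.exp (-q) * (q ^ x / x.factorial)) :=
    hbase.mul_left _
  have hg : Summable (fun x : ℕ => |f (x + 1) * (Real.exp (-q) * q ^ x / x.factorial)|) := by
    refine Summable.of_nonneg_of_le (fun x => abs_nonneg _) ?_ hmaj
    intro x
    rw [abs_mul, abs_of_nonneg (hpos x)]
    have := hM (x + 1)
    calc |f (x+1)| * (Real.exp (-q) * q ^ x / x.factorial)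
        ≤ M * (Real.exp (-q) * q ^ x / x.factorial) := by
          apply mul_le_mul_of_nonneg_right this (hpos x)
      _ = M * Real.exp (-q) * (q ^ x / x.factorial) := by ring
  -- key identity
  have key : ∀ n : ℕ, ((n + 1 : ℕ) : ℝ) * f (n + 1) *
      (Real.exp (-q) * q ^ (n + 1) / (n + 1).factorial)
      = q * (f (n + 1) * (Real.exp (-q) * q ^ n / n.factorial)) := by
    intro n
    have h1 : ((n + 1).factorial : ℝ) = ((n : ℝ) + 1) * n.factorial := by
      rw [Nat.factorial_succ]; push_cast; ring
    have h2 : (n.factorial : ℝ) ≠ 0 := Nat.cast_ne_zero.mpr n.factorial_ne_zero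
    have h3 : ((n : ℝ) + 1) ≠ 0 := by positivity
    rw [h1]
    push_cast
    field_simp
    ring
  have hh : Summable (fun x : ℕ => |(x : ℝ) * f x * (Real.exp (-q) * q ^ x / x.factorial)|) := by
    rw [← summable_nat_add_iff 1]
    have : (fun n : ℕ => |((n + 1 : ℕ) : ℝ) * f (n + 1) *
        (Real.exp (-q) * q ^ (n + 1) / (n + 1).factorial)|)
        = fun n : ℕ => |q| * |f (n + 1) * (Real.exp (-q) * q ^ n / n.factorial)| := by
      funext n
      rw [key n, abs_mul]
    exact this ▸ hg.mul_left |q|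
  refine ⟨hh, hg, ?_⟩
  have hh' : Summable (fun x : ℕ => (x : ℝ) * f x * (Real.exp (-q) * q ^ x / x.factorial)) :=
    hh.of_abs
  have hg' : Summable (fun x : ℕ => f (x + 1) * (Real.exp (-q) * q ^ x / x.factorial)) :=
    hg.of_abs
  rw [Summable.tsum_eq_zero_add hh']
  simp only [Nat.cast_zero, zero_mul, zero_add]
  rw [← tsum_mul_left]
  exact tsum_congr key
end

section
/- Let q > 0 be real and let p : ℕ → ℝ satisfy p(x) ≥ 0 for all x, Σ_{x=0}^∞ p(x) = 1, and Σ_{x=0}^∞ x·p(x) < ∞. Suppose that for every bounded function f : ℕ → ℝ, Σ_{x=0}^∞ x·f(x)·p(x) = q·Σ_{x=0}^∞ f(x+1)·p(x). Then p(x) = e^{−q} q^x / x! for every x ∈ ℕ. -/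
open scoped BigOperators

theorem stmt_13 (q : ℝ) (hq : 0 < q) (p : ℕ → ℝ)
    (hpos : ∀ x : ℕ, 0 ≤ p x) (hp1 : ∑' x : ℕ, p x = 1)
    (hmean : Summable (fun x : ℕ => (x : ℝ) * p x))
    (hstein : ∀ f : ℕ → ℝ, (∃ M : ℝ, ∀ x : ℕ, |f x| ≤ M) →
      ∑' x : ℕ, (x : ℝ) * f x * p x = q * ∑' x : ℕ, f (x + 1) * p x) :
    ∀ x : ℕ, p x = Real.exp (-q) * q ^ x / x.factorial := by
  -- Step 1: recurrence (n+1) p(n+1) = q p(n)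
  have hrec : ∀ n : ℕ, ((n : ℝ) + 1) * p (n + 1) = q * p n := by
    intro n
    have hb : ∃ M : ℝ, ∀ x : ℕ, |(if x = n + 1 then (1:ℝ) else 0)| ≤ M := by
      refine ⟨1, fun x => ?_⟩
      split <;> simp
    have h := hstein (fun x => if x = n + 1 then (1:ℝ) else 0) hb
    have hL : ∑' x : ℕ, (x : ℝ) * (if x = n + 1 then (1:ℝ) else 0) * p x
        = ((n : ℝ) + 1) * p (n + 1) := by
      rw [tsum_eq_single (n + 1) (by intro b hb'; simp [hb'])]
      simp
    have hR : ∑' x : ℕ, (if x + 1 = n + 1 then (1:ℝ) else 0) * p x = p n := by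
      rw [tsum_eq_single n (by intro b hb'; simp [hb'])]
      simp
    rw [hL, hR] at h
    exact h
  -- Step 2: p n = p 0 * q^n / n!
  have hform : ∀ n : ℕ, p n = p 0 * (q ^ n / n.factorial) := by
    intro n
    induction n with
    | zero => simp
    | succ k ih =>
      have h := hrec k
      have hk : ((k : ℝ) + 1) ≠ 0 := by positivity
      have : p (k + 1) = q * p k / ((k : ℝ) + 1) := by
        field_simp at h ⊢; linarith
      rw [this, ih]
      rw [Nat.factorial_succ]
      push_cast
      field_simp
      ring
  -- Step 3: sum gives p 0 = exp(-q)
  have hexp : ∑' n : ℕ, q ^ n / (n.factorial : ℝ) = Real.exp q := by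
    rw [Real.exp_eq_exp_ℝ, NormedSpace.exp_eq_tsum_div]
  have hsum : (1 : ℝ) = p 0 * Real.exp q := by
    rw [← hp1]
    calc ∑' x : ℕ, p x = ∑' x : ℕ, p 0 * (q ^ x / x.factorial) := by
          exact tsum_congr hform
      _ = p 0 * ∑' x : ℕ, q ^ x / (x.factorial : ℝ) := tsum_mul_left
      _ = p 0 * Real.exp q := by rw [hexp]
  have hp0 : p 0 = Real.exp (-q) := by
    have he : Real.exp q ≠ 0 := (Real.exp_pos q).ne'
    rw [Real.exp_neg]
    field_simp
    linarith
  intro x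
  rw [hform x, hp0]
  ring
end

section
/- Let q > 0 be real and let m ≥ 1 be a natural number. Then Σ_{x=0}^∞ ((x:ℝ) − q)^{m+1} · e^{−q} q^x / x! = q · Σ_{j=0}^{m−1} binom(m, j) · (Σ_{x=0}^∞ ((x:ℝ) − q)^{j} · e^{−q} q^x / x!), where all the series converge absolutely. -/
open Filter


lemma aux_g (q : ℝ) (hq : 0 < q) (j : ℕ) :
    Summable (fun x : ℕ => ((x : ℝ) + q) ^ j * (q ^ x / x.factorial)) := by
  have hpos : ∀ x : ℕ, 0 < ((x : ℝ) + q) ^ j * (q ^ x / x.factorial) := by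
    intro x
    positivity
  apply summable_of_ratio_test_tendsto_lt_one (l := 0) one_pos
  · exact Eventually.of_forall fun n => (hpos n).ne'
  · have h1 : Tendsto (fun n : ℕ => (((n : ℝ) + 1 + q) / ((n : ℝ) + q)) ^ j) atTop (nhds 1) := by
      have : Tendsto (fun n : ℕ => ((n : ℝ) + 1 + q) / ((n : ℝ) + q)) atTop (nhds 1) := by
        have : (fun n : ℕ => ((n : ℝ) + 1 + q) / ((n : ℝ) + q))
            = fun n : ℕ => 1 + 1 / ((n : ℝ) + q) := by
          funext n
          have h0 : ((n : ℝ) + q) ≠ 0 := by positivity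
          field_simp
          ring
        rw [this]
        have h2 : Tendsto (fun n : ℕ => 1 / ((n : ℝ) + q)) atTop (nhds 0) :=
          Tendsto.div_atTop tendsto_const_nhds
            (tendsto_atTop_add_const_right _ q tendsto_natCast_atTop_atTop)
        simpa using tendsto_const_nhds.add h2
      simpa using this.pow j
    have h2 : Tendsto (fun n : ℕ => q / ((n : ℝ) + 1)) atTop (nhds 0) :=
      Tendsto.div_atTop tendsto_const_nhds
        (tendsto_atTop_add_const_right _ 1 tendsto_natCast_atTop_atTop)
    have := h1.mul h2
    rw [mul_zero] at this
    apply this.congr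
    intro n
    have hn0 : (0:ℝ) < (n:ℝ) + q := by positivity
    have hn1 : (0:ℝ) < (n:ℝ) + 1 := by positivity
    rw [Real.norm_of_nonneg (hpos n).le, Real.norm_of_nonneg (hpos (n+1)).le]
    push_cast [Nat.factorial_succ]
    rw [div_pow, pow_succ]
    field_simp

lemma aux_abs (q : ℝ) (hq : 0 < q) (j : ℕ) :
    Summable (fun x : ℕ =>
      |((x : ℝ) - q) ^ j * (Real.exp (-q) * q ^ x / x.factorial)|) := by
  refine Summable.of_nonneg_of_le (fun x => abs_nonneg _) ?_ ((aux_g q hq j).mul_left (Real.exp (-q)))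
  · intro x
    rw [abs_mul, abs_pow]
    have h1 : |(x : ℝ) - q| ≤ (x : ℝ) + q := by
      rw [abs_le]; constructor <;> nlinarith [Nat.cast_nonneg (α := ℝ) x]
    have h2 : |Real.exp (-q) * q ^ x / x.factorial| = Real.exp (-q) * (q ^ x / x.factorial) := by
      rw [abs_of_nonneg (by positivity)]; ring
    rw [h2]
    have h3 : |(x : ℝ) - q| ^ j ≤ ((x : ℝ) + q) ^ j :=
      pow_le_pow_left₀ (abs_nonneg _) h1 j
    have : (0:ℝ) ≤ Real.exp (-q) * (q ^ x / x.factorial) := by positivity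
    nlinarith [pow_nonneg (abs_nonneg ((x:ℝ) - q)) j]

lemma aux_x (q : ℝ) (hq : 0 < q) (m : ℕ) :
    Summable (fun x : ℕ =>
      (x : ℝ) * (((x : ℝ) - q) ^ m * (Real.exp (-q) * q ^ x / x.factorial))) := by
  apply Summable.of_norm_bounded
    (g := fun x : ℕ => Real.exp (-q) * (((x : ℝ) + q) ^ (m + 1) * (q ^ x / x.factorial)))
    ((aux_g q hq (m + 1)).mul_left _)
  intro x
  rw [Real.norm_eq_abs, abs_mul, abs_mul, abs_pow]
  have hx : |(x : ℝ)| = (x : ℝ) := abs_of_nonneg (Nat.cast_nonneg x)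
  have h1 : |(x : ℝ) - q| ≤ (x : ℝ) + q := by
    rw [abs_le]; constructor <;> nlinarith [Nat.cast_nonneg (α := ℝ) x]
  have h2 : |Real.exp (-q) * q ^ x / x.factorial| = Real.exp (-q) * (q ^ x / x.factorial) := by
    rw [abs_of_nonneg (by positivity)]; ring
  rw [hx, h2, pow_succ]
  have h3 : |(x : ℝ) - q| ^ m ≤ ((x : ℝ) + q) ^ m :=
    pow_le_pow_left₀ (abs_nonneg _) h1 m
  have hxq : (x : ℝ) ≤ (x : ℝ) + q := by linarith
  have e1 : (0:ℝ) ≤ Real.exp (-q) * (q ^ x / x.factorial) := by positivity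
  calc (x : ℝ) * (|(x : ℝ) - q| ^ m * (Real.exp (-q) * (q ^ x / x.factorial)))
      ≤ ((x:ℝ) + q) * (((x : ℝ) + q) ^ m * (Real.exp (-q) * (q ^ x / x.factorial))) := by
        apply mul_le_mul hxq ?_ (by positivity) (by positivity)
        exact mul_le_mul_of_nonneg_right h3 e1
    _ = Real.exp (-q) * (((x : ℝ) + q) ^ m * ((x:ℝ) + q) * (q ^ x / x.factorial)) := by ring

open scoped BigOperators

theorem stmt_16 (q : ℝ) (hq : 0 < q) (m : ℕ) (hm : 1 ≤ m) :
    (∀ j ≤ m + 1, Summable (fun x : ℕ =>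
      |((x : ℝ) - q) ^ j * (Real.exp (-q) * q ^ x / x.factorial)|)) ∧
    ∑' x : ℕ, ((x : ℝ) - q) ^ (m + 1) * (Real.exp (-q) * q ^ x / x.factorial)
      = q * ∑ j ∈ Finset.range m, (m.choose j : ℝ) *
          ∑' x : ℕ, ((x : ℝ) - q) ^ j * (Real.exp (-q) * q ^ x / x.factorial) := by
  set p : ℕ → ℝ := fun x => Real.exp (-q) * q ^ x / x.factorial with hp
  refine ⟨fun j _ => aux_abs q hq j, ?_⟩
  have hS : ∀ j, Summable (fun x : ℕ => ((x : ℝ) - q) ^ j * p x) :=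
    fun j => (aux_abs q hq j).of_abs
  have hT : Summable (fun x : ℕ => (x : ℝ) * (((x : ℝ) - q) ^ m * p x)) := aux_x q hq m
  have hps : ∀ n : ℕ, ((n : ℝ) + 1) * p (n + 1) = q * p n := by
    intro n
    simp only [hp, Nat.factorial_succ]
    push_cast
    have h1 : ((n:ℝ) + 1) ≠ 0 := by positivity
    have h2 : (n.factorial : ℝ) ≠ 0 := by positivity
    field_simp
    ring
  have hB : (∑' x : ℕ, ((x : ℝ) - q) ^ (m + 1) * p x)
      = (∑' x : ℕ, (x : ℝ) * (((x : ℝ) - q) ^ m * p x))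
        - q * ∑' x : ℕ, ((x : ℝ) - q) ^ m * p x := by
    rw [← tsum_mul_left, ← Summable.tsum_sub hT ((hS m).mul_left q)]
    congr 1; funext x; ring
  have hC : (∑' x : ℕ, (x : ℝ) * (((x : ℝ) - q) ^ m * p x))
      = q * ∑' x : ℕ, ((x : ℝ) + 1 - q) ^ m * p x := by
    rw [Summable.tsum_eq_zero_add hT]
    simp only [Nat.cast_zero, zero_mul, zero_add]
    rw [← tsum_mul_left]
    congr 1; funext n
    push_cast
    rw [show ((n:ℝ) + 1) * ((((n:ℝ) + 1) - q) ^ m * p (n + 1))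
        = (((n:ℝ) + 1) - q) ^ m * (((n:ℝ) + 1) * p (n + 1)) from by ring, hps n]
    ring
  have hD : (∑' x : ℕ, ((x : ℝ) + 1 - q) ^ m * p x)
      = ∑ j ∈ Finset.range (m + 1), (m.choose j : ℝ) *
          ∑' x : ℕ, ((x : ℝ) - q) ^ j * p x := by
    have key : ∀ x : ℕ, ((x : ℝ) + 1 - q) ^ m * p x
        = ∑ j ∈ Finset.range (m + 1), (m.choose j : ℝ) * (((x : ℝ) - q) ^ j * p x) := by
      intro x
      rw [show ((x:ℝ) + 1 - q) = ((x:ℝ) - q) + 1 by ring, add_pow, Finset.sum_mul]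
      exact Finset.sum_congr rfl fun j _ => by ring
    simp_rw [key]
    rw [Summable.tsum_finsetSum (fun j _ => (hS j).mul_left _)]
    exact Finset.sum_congr rfl fun j _ => by rw [tsum_mul_left]
  rw [hB, hC, hD, Finset.sum_range_succ, Nat.choose_self, Nat.cast_one, one_mul]
  ring
end

section
/- Let q > 0 be real and c ≥ 1 a natural number. Then Σ_{k=0}^∞ (k:ℝ) · max((k:ℝ) − c, 0) · e^{−q} q^k / k! = q² · (Σ_{m=c−1}^∞ e^{−q} q^m / m!) − q·(c − 1) · (Σ_{m=c}^∞ e^{−q} q^m / m!). -/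
open scoped BigOperators

lemma summable_shift_aux (q : ℝ) (a : ℕ) :
    Summable (fun m : ℕ => Real.exp (-q) * q ^ (m + a) / (m + a).factorial) := by
  have h2 : Summable (fun m : ℕ => q ^ (m + a) / (m + a).factorial) :=
    (Real.summable_pow_div_factorial q).comp_injective (add_left_injective a)
  simpa [mul_div_assoc] using h2.mul_left (Real.exp (-q))

theorem stmt_19 (q : ℝ) (hq : 0 < q) (c : ℕ) (hc : 1 ≤ c) :
    ∑' k : ℕ, (k : ℝ) * max ((k : ℝ) - c) 0 * (Real.exp (-q) * q ^ k / k.factorial)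
      = q ^ 2 * (∑' m : ℕ, Real.exp (-q) * q ^ (m + (c - 1)) / (m + (c - 1)).factorial)
        - q * ((c : ℝ) - 1) * ∑' m : ℕ, Real.exp (-q) * q ^ (m + c) / (m + c).factorial := by
  obtain ⟨d, rfl⟩ : ∃ d, c = d + 1 := ⟨c - 1, (Nat.succ_pred_eq_of_pos hc).symm⟩
  simp only [Nat.add_sub_cancel]
  have hg1 := summable_shift_aux q d
  have hg2 := summable_shift_aux q (d + 1)
  set f : ℕ → ℝ := fun k =>
    (k : ℝ) * max ((k : ℝ) - ((d + 1 : ℕ) : ℝ)) 0 * (Real.exp (-q) * q ^ k / k.factorial)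
    with hf
  have hshift : ∀ n : ℕ, f (n + (d + 2)) =
      q ^ 2 * (Real.exp (-q) * q ^ (n + d) / (n + d).factorial)
        - q * (d : ℝ) * (Real.exp (-q) * q ^ (n + (d + 1)) / (n + (d + 1)).factorial) := by
    intro n
    have e1 : n + (d + 2) = (n + d) + 1 + 1 := by omega
    have e2 : n + (d + 1) = (n + d) + 1 := by omega
    have hne : ((n + d).factorial : ℝ) ≠ 0 := Nat.cast_ne_zero.mpr (Nat.factorial_ne_zero _)
    have hmax : max (((n + (d + 2) : ℕ) : ℝ) - ((d + 1 : ℕ) : ℝ)) 0 = (n : ℝ) + 1 := by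
      have : (((n + (d + 2) : ℕ)) : ℝ) - ((d + 1 : ℕ) : ℝ) = (n : ℝ) + 1 := by
        push_cast; ring
      rw [this, max_eq_left (by positivity)]
    simp only [hf]
    rw [hmax]
    simp only [e1, e2, Nat.factorial_succ]
    push_cast
    field_simp
    ring
  have hsum : Summable (fun n : ℕ => f (n + (d + 2))) := by
    rw [funext hshift]
    exact (hg1.mul_left _).sub (hg2.mul_left _)
  have hzero : Function.support f ⊆ Set.range (· + (d + 2)) := by
    intro x hx
    by_contra h
    apply hx
    have hxle : x ≤ d + 1 := by
      by_contra h2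
      exact h ⟨x - (d + 2), by show x - (d + 2) + (d + 2) = x; omega⟩
    have hm : max ((x : ℝ) - ((d + 1 : ℕ) : ℝ)) 0 = 0 := by
      apply max_eq_right
      have : (x : ℝ) ≤ ((d + 1 : ℕ) : ℝ) := by exact_mod_cast hxle
      linarith
    simp only [hf]
    rw [hm]
    ring
  have key :=
    Function.Injective.tsum_eq (f := f) (add_left_injective (d + 2)) hzero
  calc ∑' k : ℕ, f k = ∑' n : ℕ, f (n + (d + 2)) := key.symm
    _ = ∑' n : ℕ, (q ^ 2 * (Real.exp (-q) * q ^ (n + d) / (n + d).factorial)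
          - q * (d : ℝ) * (Real.exp (-q) * q ^ (n + (d + 1)) / (n + (d + 1)).factorial)) :=
        tsum_congr hshift
    _ = q ^ 2 * (∑' m : ℕ, Real.exp (-q) * q ^ (m + d) / (m + d).factorial)
        - q * (((d + 1 : ℕ) : ℝ) - 1) *
          ∑' m : ℕ, Real.exp (-q) * q ^ (m + (d + 1)) / (m + (d + 1)).factorial := by
        rw [Summable.tsum_sub (hg1.mul_left _) (hg2.mul_left _), tsum_mul_left, tsum_mul_left]
        push_cast
        ring
end
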